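/- Let G be a group with finite generating set S of cardinality N ≥ 2 not containing e, and define the quantum channels Φ_{l,S} and Φ_{r,S} on trace-class operators of ℓ²(G) by Φ_{l,S}(ξ) = (1/N)Σ_{s∈S} λ_G(s)ξλ_G(s)* and Φ_{r,S}(ξ) = (1/N)Σ_{s∈S} ρ_G(s)ξρ_G(s)*. Then the von Neumann entropy of (Φ_{l,S}∘Φ_{r,S})(ξ_e), where ξ_e is the rank-one projection onto the Dirac function δ_e, satisfies H((Φ_{l,S}∘Φ_{r,S})(ξ_e)) ≤ 2 log N − (log N)/N. -/

import Mathlib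

open scoped BigOperators ComplexOrder

noncomputable section

variable {G : Type*} [Group G]

/-- `ℓ²(G)` with complex coefficients. -/
abbrev l2 (G : Type*) := lp (fun _ : G => ℂ) 2

/-- The rank-one projection `ξ_v = ⟨·,v⟩v` onto the line spanned by `v`. -/
def rankOne (v : l2 G) : l2 G →L[ℂ] l2 G := (innerSL ℂ v).smulRight v

/-- Conjugation `ξ ↦ TξT*` by a unitary (here a linear isometric equivalence,
whose adjoint is its inverse). -/
def conjBy (U : l2 G ≃ₗᵢ[ℂ] l2 G) (A : l2 G →L[ℂ] l2 G) : l2 G →L[ℂ] l2 G :=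
  (U.toContinuousLinearEquiv : l2 G →L[ℂ] l2 G) ∘L A ∘L
    (U.symm.toContinuousLinearEquiv : l2 G →L[ℂ] l2 G)

section Aux

variable [DecidableEq G]

/-- single basis vector -/
def del (g : G) : l2 G := lp.single 2 g (1:ℂ)

set_option linter.unusedSectionVars false in
lemma del_apply (g x : G) : (del g : ∀ _ : G, ℂ) x = if x = g then 1 else 0 := by
  rw [del, lp.single_apply]
  split_ifs with h
  · subst h; simp
  · simp [Pi.single_apply, h]

set_option linter.unusedSectionVars false in
lemma inner_del_left (g : G) (y : l2 G) : (inner ℂ (del g) y : ℂ) = (y : ∀ _ : G, ℂ) g := by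
  rw [del, lp.inner_single_left]; simp

set_option linter.unusedSectionVars false in
lemma inner_del_right (g : G) (y : l2 G) :
    (inner ℂ y (del g) : ℂ) = starRingEnd ℂ ((y : ∀ _ : G, ℂ) g) := by
  rw [del, lp.inner_single_right]; simp [RCLike.inner_apply]

set_option linter.unusedSectionVars false in
lemma inner_del_del (g : G) : (inner ℂ (del g) (del g) : ℂ) = 1 := by
  rw [inner_del_left, del_apply]; simp

set_option linter.unusedSectionVars false in
lemma norm_del (g : G) : ‖del g‖ = 1 := by
  have h := inner_del_del g
  have h3 : (‖del g‖ : ℝ) ^ 2 = 1 := by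
    have h2 := inner_self_eq_norm_sq (𝕜 := ℂ) (del g)
    rw [h] at h2
    simpa using h2.symm
  nlinarith [norm_nonneg (del g)]

end Aux

set_option maxHeartbeats 1000000 in
/-- Let `S` be a finite generating set of `G` of cardinality `N ≥ 2`
with `e ∉ S`, and let `λ` and `ρ` be the left and right regular representations on
`ℓ²(G)`. Consider the quantum channels `Φ_{l,S}(ξ) = N⁻¹ Σ_s λ(s)ξλ(s)*` and
`Φ_{r,S}(ξ) = N⁻¹ Σ_s ρ(s)ξρ(s)*`. Then any orthonormal eigen-decomposition
`(Φ_{l,S}∘Φ_{r,S})(ξ_e) = Σ c_i ξ_{v_i}` satisfies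
`−Σ c_i log c_i ≤ 2 log N − (log N)/N`. -/
theorem stmt12 [DecidableEq G] (S : Finset G) (hS1 : (1 : G) ∉ S) (hN : 2 ≤ S.card)
    (hgen : Subgroup.closure (S : Set G) = ⊤)
    (lam rho : G → (l2 G ≃ₗᵢ[ℂ] l2 G))
    (hlam : ∀ g : G, ∀ f : l2 G, ∀ x : G, (lam g f : ∀ _ : G, ℂ) x = (f : ∀ _ : G, ℂ) (g⁻¹ * x))
    (hrho : ∀ g : G, ∀ f : l2 G, ∀ x : G, (rho g f : ∀ _ : G, ℂ) x = (f : ∀ _ : G, ℂ) (x * g))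
    (Φl Φr : (l2 G →L[ℂ] l2 G) → (l2 G →L[ℂ] l2 G))
    (hΦl : ∀ A, Φl A = ((S.card : ℂ))⁻¹ • ∑ s ∈ S, conjBy (lam s) A)
    (hΦr : ∀ A, Φr A = ((S.card : ℂ))⁻¹ • ∑ s ∈ S, conjBy (rho s) A)
    (ξe : l2 G →L[ℂ] l2 G) (hξe : ξe = rankOne (lp.single 2 (1 : G) (1 : ℂ)))
    {ι : Type} [Countable ι] (c : ι → ℝ) (v : ι → l2 G)
    (hv : Orthonormal ℂ v) (hc : ∀ i, 0 ≤ c i)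
    (hdecomp : ∀ x : l2 G, (Φl (Φr ξe)) x = ∑' i, (c i : ℂ) • (inner ℂ (v i) x : ℂ) • v i) :
    ∑' i, -(c i * Real.log (c i))
      ≤ 2 * Real.log S.card - Real.log S.card / S.card := by
  classical
  set N : ℕ := S.card with hNdef
  have hN2 : (2:ℝ) ≤ (N:ℝ) := by exact_mod_cast hN
  have hN0 : (0:ℝ) < (N:ℝ) := by linarith
  have hNne : (N:ℝ) ≠ 0 := ne_of_gt hN0
  have hNCne : (N:ℂ) ≠ 0 := by exact_mod_cast (Nat.cast_ne_zero (R := ℂ)).mpr (by omega)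
  set m : G → ℕ := fun g => (S.filter fun t => g⁻¹ * t ∈ S).card with hm
  set a : G → ℝ := fun g => (m g : ℝ) / (N:ℝ)^2 with ha
  have haval : ∀ g, a g = (m g : ℝ) / (N:ℝ)^2 := fun _ => rfl
  have hanonneg : ∀ g, 0 ≤ a g := fun g => by rw [haval]; positivity
  -- inverses of the regular representations, pointwise
  have hrhosymm : ∀ (s : G) (f : l2 G) (g : G),
      ((rho s).symm f : ∀ _ : G, ℂ) g = (f : ∀ _ : G, ℂ) (g * s⁻¹) := by
    intro s f g
    have h := hrho s ((rho s).symm f) (g * s⁻¹)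
    rw [LinearIsometryEquiv.apply_symm_apply] at h
    rw [h, inv_mul_cancel_right]
  have hlamsymm : ∀ (t : G) (f : l2 G) (g : G),
      ((lam t).symm f : ∀ _ : G, ℂ) g = (f : ∀ _ : G, ℂ) (t * g) := by
    intro t f g
    have h := hlam t ((lam t).symm f) (t * g)
    rw [LinearIsometryEquiv.apply_symm_apply] at h
    rw [h, inv_mul_cancel_left]
  -- the rank-one projection, pointwise
  have hXi : ∀ (y : l2 G) (x : G),
      (ξe y : ∀ _ : G, ℂ) x = (y : ∀ _ : G, ℂ) 1 * (if x = 1 then 1 else 0) := by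
    intro y x
    rw [hξe]
    show (rankOne (del 1) y : ∀ _ : G, ℂ) x = _
    have h1 : rankOne (del 1) y = (inner ℂ (del 1) y : ℂ) • del 1 := by
      simp [rankOne]
    rw [h1, lp.coeFn_smul, Pi.smul_apply, inner_del_left, del_apply, smul_eq_mul]
  -- the right channel, pointwise
  have hB : ∀ (h : l2 G) (x : G), ((Φr ξe) h : ∀ _ : G, ℂ) x
      = ((N:ℂ))⁻¹ * (if x⁻¹ ∈ S then (h : ∀ _ : G, ℂ) x else 0) := by
    intro h x
    rw [hΦr]
    simp only [ContinuousLinearMap.smul_apply, ContinuousLinearMap.sum_apply,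
      lp.coeFn_smul, Pi.smul_apply, lp.coeFn_sum, Finset.sum_apply, smul_eq_mul]
    have hterm : ∀ s ∈ S, ((conjBy (rho s) ξe) h : ∀ _ : G, ℂ) x
        = if s = x⁻¹ then (h : ∀ _ : G, ℂ) x else 0 := by
      intro s hs
      have h1 : (conjBy (rho s) ξe) h = rho s (ξe ((rho s).symm h)) := by
        simp [conjBy]
      rw [h1, hrho s _ x, hXi, hrhosymm]
      by_cases hxs : s = x⁻¹
      · subst hxs; simp
      · have hne : x * s ≠ 1 := by
          intro hh
          exact hxs (eq_inv_of_mul_eq_one_right hh)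
        simp [hne, hxs]
    rw [Finset.sum_congr rfl hterm, Finset.sum_ite_eq' S x⁻¹ (fun _ => (h : ∀ _ : G, ℂ) x)]
  -- the composite channel, pointwise: multiplication by `a g`
  have hA : ∀ (f : l2 G) (g : G), ((Φl (Φr ξe)) f : ∀ _ : G, ℂ) g
      = ((a g : ℝ) : ℂ) * (f : ∀ _ : G, ℂ) g := by
    intro f g
    rw [hΦl]
    simp only [ContinuousLinearMap.smul_apply, ContinuousLinearMap.sum_apply,
      lp.coeFn_smul, Pi.smul_apply, lp.coeFn_sum, Finset.sum_apply, smul_eq_mul]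
    have hterm : ∀ t ∈ S, ((conjBy (lam t) (Φr ξe)) f : ∀ _ : G, ℂ) g
        = (N:ℂ)⁻¹ * (if g⁻¹ * t ∈ S then (f : ∀ _ : G, ℂ) g else 0) := by
      intro t ht
      have h1 : (conjBy (lam t) (Φr ξe)) f = lam t ((Φr ξe) ((lam t).symm f)) := by
        simp [conjBy]
      rw [h1, hlam t _ g, hB, hlamsymm, mul_inv_rev, inv_inv, mul_inv_cancel_left]
    rw [Finset.sum_congr rfl hterm, ← Finset.mul_sum, ← Finset.sum_filter, Finset.sum_const,
      nsmul_eq_mul]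
    have hag : ((a g : ℝ) : ℂ) = (m g : ℂ) * (((N:ℂ))^2)⁻¹ := by
      rw [ha]; push_cast; ring
    rw [hag]
    ring
  -- action on basis vectors
  have hAδ : ∀ g : G, (Φl (Φr ξe)) (del g) = ((a g : ℝ) : ℂ) • del g := by
    intro g
    refine lp.ext (funext fun x => ?_)
    rw [hA]
    have : ((((a g : ℝ) : ℂ) • del g : l2 G) : ∀ _ : G, ℂ) x
        = ((a g : ℝ) : ℂ) * (del g : ∀ _ : G, ℂ) x := by
      rw [lp.coeFn_smul, Pi.smul_apply, smul_eq_mul]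
    rw [this]
    rcases eq_or_ne x g with rfl | hne
    · rfl
    · rw [del_apply, if_neg hne, mul_zero, mul_zero]
  -- eigenvector equation
  have heig : ∀ j, (Φl (Φr ξe)) (v j) = ((c j : ℝ) : ℂ) • v j := by
    intro j
    rw [hdecomp (v j), tsum_eq_single j ?_]
    · have h1 : (inner ℂ (v j) (v j) : ℂ) = 1 := by
        rw [inner_self_eq_norm_sq_to_K (𝕜 := ℂ) (v j), hv.1 j]
        norm_num
      rw [h1, one_smul]
    · intro i hij
      rw [hv.2 hij, zero_smul, smul_zero]
  -- each nonzero c j is one of the eigenvalues a g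
  have hcval : ∀ j, c j ≠ 0 → ∃ g, c j = a g ∧ m g ≠ 0 := by
    intro j hj
    have hvj0 : ⇑(v j) ≠ 0 := by
      intro h0
      have h1 : v j = 0 := lp.eq_zero_iff_coeFn_eq_zero.mpr h0
      have h2 := hv.1 j
      rw [h1] at h2
      simp at h2
    obtain ⟨g, hg⟩ := Function.ne_iff.mp hvj0
    have h1 := congrArg (fun w : l2 G => (w : ∀ _ : G, ℂ) g) (heig j)
    simp only at h1
    rw [hA] at h1
    have h2 : ((((c j : ℝ) : ℂ) • v j : l2 G) : ∀ _ : G, ℂ) g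
        = ((c j : ℝ) : ℂ) * (v j : ∀ _ : G, ℂ) g := by
      rw [lp.coeFn_smul, Pi.smul_apply, smul_eq_mul]
    rw [h2] at h1
    have hgne : (v j : ∀ _ : G, ℂ) g ≠ 0 := by simpa using hg
    have h3 : ((a g : ℝ) : ℂ) = ((c j : ℝ) : ℂ) := mul_right_cancel₀ hgne h1
    have h4 : a g = c j := by exact_mod_cast h3
    refine ⟨g, h4.symm, ?_⟩
    intro hm0
    apply hj
    rw [← h4, haval, hm0]
    simp
  -- bounds on the c j
  have hmle : ∀ g, (m g : ℝ) ≤ (N:ℝ) := by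
    intro g
    have := Finset.card_filter_le S (fun t => g⁻¹ * t ∈ S)
    exact_mod_cast this
  have hcle : ∀ j, c j ≤ 1 / (N:ℝ) := by
    intro j
    rcases eq_or_ne (c j) 0 with h0 | h0
    · rw [h0]; positivity
    · obtain ⟨g, hg, _⟩ := hcval j h0
      rw [hg, ha]
      rw [div_le_div_iff₀ (by positivity) hN0]
      calc (m g : ℝ) * (N:ℝ) ≤ (N:ℝ) * (N:ℝ) :=
            mul_le_mul_of_nonneg_right (hmle g) (le_of_lt hN0)
        _ = 1 * (N:ℝ)^2 := by ring
  have hclb : ∀ j, c j ≠ 0 → 1 / (N:ℝ)^2 ≤ c j := by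
    intro j h0
    obtain ⟨g, hg, hmg⟩ := hcval j h0
    rw [hg, ha]
    have h1 : (1:ℝ) ≤ (m g : ℝ) := by exact_mod_cast Nat.one_le_iff_ne_zero.mpr hmg
    apply div_le_div_of_nonneg_right h1 ?_ |>.trans_eq rfl
    · positivity
  -- value at the identity
  have hm1 : m 1 = N := by
    have h1 : S.filter (fun t => (1:G)⁻¹ * t ∈ S) = S :=
      Finset.filter_true_of_mem (fun t ht => by simpa using ht)
    rw [hm]
    exact (congrArg Finset.card h1).trans hNdef.symm
  have ha1 : a 1 = 1 / (N:ℝ) := by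
    rw [haval, hm1, sq, ← div_div, div_self hNne]
  -- summability of the decomposition
  have hsummand : ∀ (x : l2 G) (i : ι), (c i : ℂ) • (inner ℂ (v i) x : ℂ) • v i
      = LinearIsometry.toSpanSingleton ℂ (l2 G) (hv.1 i) ((c i : ℂ) * inner ℂ (v i) x) := by
    intro x i
    rw [smul_smul]
    rfl
  have hsummable : ∀ x : l2 G, Summable (fun i => (c i : ℂ) • (inner ℂ (v i) x : ℂ) • v i) := by
    intro x
    have hrw : (fun i => (c i : ℂ) • (inner ℂ (v i) x : ℂ) • v i)
        = fun i => LinearIsometry.toSpanSingleton ℂ (l2 G) (hv.1 i) ((c i : ℂ) * inner ℂ (v i) x) :=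
      funext (hsummand x)
    rw [hrw, hv.orthogonalFamily.summable_iff_norm_sq_summable]
    refine Summable.of_nonneg_of_le (fun i => by positivity) (fun i => ?_)
      (((hv.inner_products_summable x)).mul_left ((1 / (N:ℝ))^2))
    rw [norm_mul, mul_pow]
    have h1 : ‖((c i : ℝ) : ℂ)‖ ≤ 1 / (N:ℝ) := by
      rw [Complex.norm_real, Real.norm_eq_abs, abs_of_nonneg (hc i)]
      exact hcle i
    have h2 : (0:ℝ) ≤ ‖(inner ℂ (v i) x : ℂ)‖ ^ 2 := by positivity
    have h3 : ‖((c i : ℝ) : ℂ)‖ ^ 2 ≤ (1 / (N:ℝ)) ^ 2 := by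
      apply pow_le_pow_left₀ (norm_nonneg _) h1
    exact mul_le_mul_of_nonneg_right h3 h2
  have hhs : ∀ x : l2 G, HasSum (fun i => (c i : ℂ) • (inner ℂ (v i) x : ℂ) • v i)
      ((Φl (Φr ξe)) x) := by
    intro x
    rw [hdecomp x]
    exact (hsummable x).hasSum
  -- the diagonal matrix elements
  have hg2 : ∀ g : G, HasSum (fun i => c i * ‖(v i : ∀ _ : G, ℂ) g‖^2) (a g) := by
    intro g
    have h1 := (hhs (del g)).mapL (innerSL ℂ (del g))
    have hterm : ∀ i, innerSL ℂ (del g) ((c i : ℂ) • (inner ℂ (v i) (del g) : ℂ) • v i)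
        = ((c i * ‖(v i : ∀ _ : G, ℂ) g‖^2 : ℝ) : ℂ) := by
      intro i
      simp only [innerSL_apply_apply, inner_smul_right]
      rw [inner_del_left g (v i), inner_del_right g (v i), RCLike.conj_mul]
      norm_cast
      exact (Complex.ofReal_mul _ _).symm
    rw [funext hterm] at h1
    simp only [innerSL_apply_apply] at h1
    have h2 : (inner ℂ (del g) ((Φl (Φr ξe)) (del g)) : ℂ) = ((a g : ℝ) : ℂ) := by
      rw [hAδ g, inner_smul_right, inner_del_del, mul_one]
    rw [h2] at h1
    exact Complex.hasSum_ofReal.mp h1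
  -- the ℓ² norms of the v i
  have hva : ∀ i, HasSum (fun g => ‖(v i : ∀ _ : G, ℂ) g‖^2) 1 := by
    intro i
    have h := lp.hasSum_norm (p := 2) (by norm_num) (v i)
    rw [hv.1 i] at h
    have h2 : (2 : ENNReal).toReal = ((2:ℕ) : ℝ) := by norm_num
    rw [h2] at h
    simp only [Real.rpow_natCast, Real.one_rpow] at h
    simpa using h
  -- the eigenvalues sum to 1
  set T : Finset G := Finset.image₂ (fun t s : G => t * s⁻¹) S S with hT
  have hsupp : ∀ g ∉ T, a g = 0 := by
    intro g hgT
    suffices hmg : m g = 0 by rw [haval, hmg]; simp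
    by_contra h0
    obtain ⟨t, ht⟩ := Finset.card_ne_zero.mp h0
    rw [Finset.mem_filter] at ht
    exact hgT (Finset.mem_image₂.mpr ⟨t, ht.1, g⁻¹ * t, ht.2, by group⟩)
  have hmsum : ∑ g ∈ T, m g = N * N := by
    have hcard : ∀ t ∈ S, (T.filter fun g => g⁻¹ * t ∈ S).card = N := by
      intro t ht
      rw [hNdef]
      refine Finset.card_nbij' (fun g => g⁻¹ * t) (fun s' => t * s'⁻¹) ?_ ?_ ?_ ?_
      · intro g hgmem
        exact (Finset.mem_filter.mp hgmem).2
      · intro s' hs'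
        refine Finset.mem_filter.mpr ⟨Finset.mem_image₂.mpr ⟨t, ht, s', hs', rfl⟩, ?_⟩
        have hrw : (t * s'⁻¹)⁻¹ * t = s' := by group
        rw [hrw]; exact hs'
      · intro g hgmem
        group
      · intro s' hs'
        group
    calc ∑ g ∈ T, m g = ∑ g ∈ T, ∑ t ∈ S, (if g⁻¹ * t ∈ S then 1 else 0) := by
          refine Finset.sum_congr rfl fun g _ => ?_
          rw [hm]
          exact Finset.card_filter _ _
      _ = ∑ t ∈ S, ∑ g ∈ T, (if g⁻¹ * t ∈ S then 1 else 0) := Finset.sum_comm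
      _ = ∑ t ∈ S, (T.filter fun g => g⁻¹ * t ∈ S).card := by
          refine Finset.sum_congr rfl fun t _ => ?_
          exact (Finset.card_filter _ _).symm
      _ = ∑ _t ∈ S, N := Finset.sum_congr rfl hcard
      _ = N * N := by rw [Finset.sum_const, smul_eq_mul, hNdef]
  have hasuma : HasSum a 1 := by
    have h := hasSum_sum_of_ne_finset_zero (L := SummationFilter.unconditional G) (s := T) (f := a) hsupp
    have hh : ∑ g ∈ T, a g = 1 := by
      rw [show ∑ g ∈ T, a g = ∑ g ∈ T, (m g : ℝ)/(N:ℝ)^2 from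
        Finset.sum_congr rfl (fun g _ => haval g)]
      rw [← Finset.sum_div]
      rw [show ∑ g ∈ T, ((m g : ℝ)) = ((∑ g ∈ T, m g : ℕ) : ℝ) by push_cast; ring]
      rw [hmsum]
      push_cast
      rw [sq]
      exact div_self (by positivity)
    rwa [hh] at h
  -- trace computation: ∑ c i = 1
  have hnn : ∀ (i : ι) (g : G), 0 ≤ c i * ‖(v i : ∀ _ : G, ℂ) g‖^2 :=
    fun i g => mul_nonneg (hc i) (by positivity)
  have he2 : ∀ i, ∑' g : G, ENNReal.ofReal (c i * ‖(v i : ∀ _ : G, ℂ) g‖^2)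
      = ENNReal.ofReal (c i) := by
    intro i
    rw [← ENNReal.ofReal_tsum_of_nonneg (hnn i) (((hva i).summable).mul_left (c i))]
    congr 1
    rw [tsum_mul_left, (hva i).tsum_eq, mul_one]
  have he1 : ∀ g : G, ∑' i, ENNReal.ofReal (c i * ‖(v i : ∀ _ : G, ℂ) g‖^2)
      = ENNReal.ofReal (a g) := by
    intro g
    rw [← ENNReal.ofReal_tsum_of_nonneg (fun i => hnn i g) (hg2 g).summable, (hg2 g).tsum_eq]
  have heq : ∑' i, ENNReal.ofReal (c i) = ENNReal.ofReal 1 := by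
    calc ∑' i, ENNReal.ofReal (c i)
        = ∑' i, ∑' g : G, ENNReal.ofReal (c i * ‖(v i : ∀ _ : G, ℂ) g‖^2) :=
          tsum_congr fun i => (he2 i).symm
      _ = ∑' g : G, ∑' i, ENNReal.ofReal (c i * ‖(v i : ∀ _ : G, ℂ) g‖^2) := ENNReal.tsum_comm
      _ = ∑' g : G, ENNReal.ofReal (a g) := tsum_congr he1
      _ = ENNReal.ofReal 1 := by
          rw [← ENNReal.ofReal_tsum_of_nonneg hanonneg hasuma.summable, hasuma.tsum_eq]
  have hfuneq : (fun i => (ENNReal.ofReal (c i)).toReal) = c :=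
    funext fun i => ENNReal.toReal_ofReal (hc i)
  have hcsummable : Summable c := by
    have h1 := ENNReal.summable_toReal (by rw [heq]; exact ENNReal.ofReal_ne_top)
    rwa [hfuneq] at h1
  have hcsum : ∑' i, c i = 1 := by
    have h2 := ENNReal.tsum_toReal_eq (f := fun i => ENNReal.ofReal (c i))
      (fun i => ENNReal.ofReal_ne_top)
    rw [heq, hfuneq] at h2
    simpa using h2.symm
  -- the weights p i at the identity
  set p : ι → ℝ := fun i => ‖(v i : ∀ _ : G, ℂ) 1‖^2 with hp
  have hpnonneg : ∀ i, 0 ≤ p i := fun i => by rw [hp]; positivity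
  have hcp : HasSum (fun i => c i * p i) (1 / (N:ℝ)) := by
    have := hg2 1
    rwa [ha1] at this
  have hpsummable : Summable p := by
    have h1 := hv.inner_products_summable (del 1)
    have h2 : (fun i => ‖(inner ℂ (v i) (del 1) : ℂ)‖^2) = p := by
      funext i
      rw [inner_del_right]
      simp [hp]
    rwa [h2] at h1
  have hptsum : ∑' i, p i ≤ 1 := by
    have h1 := hv.tsum_inner_products_le (del 1)
    have h2 : (fun i => ‖(inner ℂ (v i) (del 1) : ℂ)‖^2) = p := by
      funext i
      rw [inner_del_right]
      simp [hp]
    rw [h2, norm_del] at h1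
    simpa using h1
  have hple : ∀ i, p i ≤ 1 := by
    intro i
    refine le_trans ?_ hptsum
    exact Summable.le_tsum hpsummable i (fun j _ => hpnonneg j)
  -- equality case: nonzero weight forces eigenvalue 1/N
  have hkey : ∀ i, p i ≠ 0 → c i = 1 / (N:ℝ) := by
    intro i hpi
    by_contra hne
    have hppos : 0 < p i := lt_of_le_of_ne (hpnonneg i) (Ne.symm hpi)
    have hlt : c i < 1 / (N:ℝ) := lt_of_le_of_ne (hcle i) hne
    have h1 : ∑' j, c j * p j < ∑' j, (1 / (N:ℝ)) * p j := by
      refine Summable.tsum_lt_tsum (f := fun j => c j * p j) (g := fun j => (1 / (N:ℝ)) * p j) (i := i)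
        (fun j => mul_le_mul_of_nonneg_right (hcle j) (hpnonneg j))
        (mul_lt_mul_of_pos_right hlt hppos) hcp.summable (hpsummable.mul_left _)
    rw [hcp.tsum_eq, tsum_mul_left] at h1
    have h2 : (1 / (N:ℝ)) * ∑' j, p j ≤ (1 / (N:ℝ)) * 1 :=
      mul_le_mul_of_nonneg_left hptsum (by positivity)
    linarith
  -- entropy bound, term by term
  set L : ℝ := Real.log (N:ℝ) with hL
  have hLnn : 0 ≤ L := Real.log_nonneg (by linarith)
  have perterm : ∀ i, -(c i * Real.log (c i)) ≤ 2 * L * c i - L * (c i * p i) := by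
    intro i
    rcases eq_or_ne (c i) 0 with h0 | h0
    · simp [h0]
    · have hcpos : 0 < c i := lt_of_le_of_ne (hc i) (Ne.symm h0)
      rcases eq_or_ne (p i) 0 with hp0 | hp0
      · rw [hp0, mul_zero, mul_zero, sub_zero]
        have hlog : -Real.log (c i) ≤ 2 * L := by
          have h1 : 1 / (N:ℝ)^2 ≤ c i := hclb i h0
          have h2 : Real.log (1 / (N:ℝ)^2) ≤ Real.log (c i) :=
            Real.log_le_log (by positivity) h1
          have h3 : Real.log (1 / (N:ℝ)^2) = -(2 * L) := by
            rw [one_div, Real.log_inv, Real.log_pow, hL]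
            push_cast
            ring
          linarith
        calc -(c i * Real.log (c i)) = c i * (-Real.log (c i)) := by ring
          _ ≤ c i * (2 * L) := mul_le_mul_of_nonneg_left hlog (le_of_lt hcpos)
          _ = 2 * L * c i := by ring
      · have hceq : c i = 1 / (N:ℝ) := hkey i hp0
        rw [hceq]
        have hlog1N : Real.log (1 / (N:ℝ)) = -L := by
          rw [one_div, Real.log_inv, hL]
        rw [hlog1N]
        have hpi1 : p i ≤ 1 := hple i
        have hN0' : 0 < 1 / (N:ℝ) := by positivity
        -- goal: -(1/N * -L) ≤ 2L/N - L * (1/N * p i)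
        have h1 : L * ((1 / (N:ℝ)) * p i) ≤ L * ((1 / (N:ℝ)) * 1) := by
          apply mul_le_mul_of_nonneg_left _ hLnn
          exact mul_le_mul_of_nonneg_left hpi1 (le_of_lt hN0')
        nlinarith
  -- summability of both sides
  have hsumR : Summable (fun i => 2 * L * c i - L * (c i * p i)) :=
    (hcsummable.mul_left (2 * L)).sub (hcp.summable.mul_left L)
  have hLHSnn : ∀ i, 0 ≤ -(c i * Real.log (c i)) := by
    intro i
    rcases eq_or_ne (c i) 0 with h0 | h0
    · simp [h0]
    · have hcpos : 0 < c i := lt_of_le_of_ne (hc i) (Ne.symm h0)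
      have hle1 : c i ≤ 1 := le_trans (hcle i) (by
        rw [div_le_one hN0]; linarith)
      have := Real.log_nonpos (le_of_lt hcpos) hle1
      nlinarith
  have hsumL : Summable (fun i => -(c i * Real.log (c i))) :=
    Summable.of_nonneg_of_le hLHSnn perterm hsumR
  -- conclude
  calc ∑' i, -(c i * Real.log (c i))
      ≤ ∑' i, (2 * L * c i - L * (c i * p i)) := Summable.tsum_le_tsum perterm hsumL hsumR
    _ = 2 * L * (∑' i, c i) - L * (∑' i, c i * p i) := by
        rw [Summable.tsum_sub (hcsummable.mul_left (2 * L)) (hcp.summable.mul_left L),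
          tsum_mul_left, tsum_mul_left]
    _ = 2 * L - L / (N:ℝ) := by
        rw [hcsum, hcp.tsum_eq]
        ring
    _ = 2 * Real.log (N:ℝ) - Real.log (N:ℝ) / (N:ℝ) := by rw [hL]
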